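/- Safety for resident policies: let N be well-formed with respect to Θ (coherent and Θ ⊢ N : ok). Then for every trustworthy site l[M]{P} in N, P →σ P' implies that the multiset Sset(σ) of labels occurring in σ satisfies Sset(σ) ≤ Θ(l). -/

import Mathlib

universe u

/-! ## Basic framework: trust levels, agents, membranes, systems -/

/-- Trust levels: `loc` (unknown), `lgood`, `lbad`. -/
inductive TrustLev : Type where
  | loc : TrustLev
  | lgood : TrustLev
  | lbad : TrustLev
deriving DecidableEq

/-- The subtyping order `<:` on trust levels: it is reflexive and satisfies
`loc <: lgood` and `loc <: lbad`. -/
def TrustLev.sub (t1 t2 : TrustLev) : Prop := t1 = t2 ∨ t1 = TrustLev.loc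

/-- Agents, parametric on the type `Act` of basic actions, the type `Loc` of
localities, and the type `Pol` of policies (digests carried by `go`). -/
inductive Agent (Act Loc : Type) (Pol : Type u) where
  | nil : Agent Act Loc Pol
  | act : Act → Agent Act Loc Pol → Agent Act Loc Pol
  | go : Loc → Pol → Agent Act Loc Pol → Agent Act Loc Pol
  | par : Agent Act Loc Pol → Agent Act Loc Pol → Agent Act Loc Pol
  | repl : Agent Act Loc Pol → Agent Act Loc Pol

/-- A membrane: a trust function on localities together with a policy.
(The partial trust function is modelled as a total function, the level `loc`
standing for ``unknown''.) -/
structure Membrane (Loc : Type) (Pol : Type u) where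
  trust : Loc → TrustLev
  pol : Pol

/-- Systems: the empty system, a site `l[M]{P}`, or a parallel composition. -/
inductive System (Act Loc : Type) (Pol : Type u) where
  | empty : System Act Loc Pol
  | site : Loc → Membrane Loc Pol → Agent Act Loc Pol → System Act Loc Pol
  | par : System Act Loc Pol → System Act Loc Pol → System Act Loc Pol

variable {Act Loc : Type} {Pol : Type u}

/-- The list of sites (name and membrane) occurring in a system. -/
def System.sites : System Act Loc Pol → List (Loc × Membrane Loc Pol)
  | System.empty => []
  | System.site l M _ => [(l, M)]
  | System.par N1 N2 => N1.sites ++ N2.sites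

/-- A site named `l` with membrane `M` is trustworthy if `M_t(l) = lgood`. -/
def Trustworthy (l : Loc) (M : Membrane Loc Pol) : Prop :=
  M.trust l = TrustLev.lgood

/-- A system is coherent if `M^k_t(l) <: M^l_t(l)` for every trustworthy site `k`
and every site `l` of the system. -/
def Coherent (N : System Act Loc Pol) : Prop :=
  ∀ p ∈ N.sites, Trustworthy p.1 p.2 →
    ∀ q ∈ N.sites, TrustLev.sub (p.2.trust q.1) (q.2.trust q.1)

/-- `SiteIn l M P N` holds when the site `l[M]{P}` occurs in the system `N`. -/
inductive SiteIn (l : Loc) (M : Membrane Loc Pol) (P : Agent Act Loc Pol) :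
    System Act Loc Pol → Prop where
  | here : SiteIn l M P (System.site l M P)
  | left {N1 N2} : SiteIn l M P N1 → SiteIn l M P (System.par N1 N2)
  | right {N1 N2} : SiteIn l M P N2 → SiteIn l M P (System.par N1 N2)

/-- Structural equivalence on agents: `|` is commutative and associative with
unit `nil`, replication unfolds, and `≡` is a congruence for `|`. -/
inductive AgEq : Agent Act Loc Pol → Agent Act Loc Pol → Prop where
  | refl (P) : AgEq P P
  | symm {P Q} : AgEq P Q → AgEq Q P
  | trans {P Q R} : AgEq P Q → AgEq Q R → AgEq P R
  | parNil (P) : AgEq (Agent.par P Agent.nil) P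
  | parComm (P Q) : AgEq (Agent.par P Q) (Agent.par Q P)
  | parAssoc (P Q R) :
      AgEq (Agent.par (Agent.par P Q) R) (Agent.par P (Agent.par Q R))
  | replUnfold (P Q) :
      AgEq (Agent.par (Agent.repl P) Q) (Agent.par P (Agent.par (Agent.repl P) Q))
  | parCong {P P' Q Q'} : AgEq P P' → AgEq Q Q' → AgEq (Agent.par P Q) (Agent.par P' Q')

/-- Structural equivalence on systems. -/
inductive StrEq : System Act Loc Pol → System Act Loc Pol → Prop where
  | refl (N) : StrEq N N
  | symm {N1 N2} : StrEq N1 N2 → StrEq N2 N1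
  | trans {N1 N2 N3} : StrEq N1 N2 → StrEq N2 N3 → StrEq N1 N3
  | parEmpty (N) : StrEq (System.par N System.empty) N
  | parComm (N1 N2) : StrEq (System.par N1 N2) (System.par N2 N1)
  | parAssoc (N1 N2 N3) :
      StrEq (System.par (System.par N1 N2) N3) (System.par N1 (System.par N2 N3))
  | parCong {N1 N1' N2 N2'} :
      StrEq N1 N1' → StrEq N2 N2' → StrEq (System.par N1 N2) (System.par N1' N2')
  | site (l M) {P Q} : AgEq P Q → StrEq (System.site l M P) (System.site l M Q)

/-- The reduction relation over systems, parametric on the `enforces`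
relation `enf` between policies and on the typechecking relation `typ`
between agents and policies.  In rule `mig`, if the target site `l` trusts
the source site `k` then the digest `T` is checked against `l`'s policy,
otherwise the full code `P` is typechecked. -/
inductive Red (enf : Pol → Pol → Prop) (typ : Agent Act Loc Pol → Pol → Prop) :
    System Act Loc Pol → System Act Loc Pol → Prop where
  | act (l M a P Q) :
      Red enf typ (System.site l M (Agent.par (Agent.act a P) Q))
        (System.site l M (Agent.par P Q))
  | par {N1 N1'} (N2) :
      Red enf typ N1 N1' → Red enf typ (System.par N1 N2) (System.par N1' N2)
  | struct {N N1 N1' N'} :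
      StrEq N N1 → Red enf typ N1 N1' → StrEq N1' N' → Red enf typ N N'
  | mig (k Mk l Ml T P Q R) :
      (if Ml.trust k = TrustLev.lgood then enf T Ml.pol else typ P Ml.pol) →
      Red enf typ
        (System.par (System.site k Mk (Agent.par (Agent.go l T P) Q))
          (System.site l Ml R))
        (System.par (System.site k Mk Q) (System.site l Ml (Agent.par P R)))

/-- The labelled transition system over agents, with labels in `Act ⊕ Loc`. -/
inductive Step : Agent Act Loc Pol → (Act ⊕ Loc) → Agent Act Loc Pol → Prop where
  | act (a P) : Step (Agent.act a P) (Sum.inl a) P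
  | mig (l T P) : Step (Agent.go l T P) (Sum.inr l) Agent.nil
  | repl {P α P'} :
      Step (Agent.par P (Agent.repl P)) α P' → Step (Agent.repl P) α P'
  | parL {P1 α P1'} (P2) :
      Step P1 α P1' → Step (Agent.par P1 P2) α (Agent.par P1' P2)
  | parR {P1 α P1'} (P2) :
      Step P1 α P1' → Step (Agent.par P2 P1) α (Agent.par P2 P1')

/-- `Trace P σ P'` means `P →σ P'`: the composite of the single steps of `σ`. -/
inductive Trace : Agent Act Loc Pol → List (Act ⊕ Loc) → Agent Act Loc Pol → Prop where
  | nil (P) : Trace P [] P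
  | cons {P α P' σ P''} : Step P α P' → Trace P' σ P'' → Trace P (α :: σ) P''

/-- The thread components of an agent: every agent is `P1 | ... | Pn`
with each `Pi` a thread (not itself a parallel composition). -/
def Agent.comps : Agent Act Loc Pol → List (Agent Act Loc Pol)
  | Agent.par P Q => P.comps ++ Q.comps
  | P => [P]

/-- A thread is an agent which is not a parallel composition. -/
def Agent.IsThread : Agent Act Loc Pol → Prop
  | Agent.par _ _ => False
  | _ => True

/-! ## Multiset policies -/

/-- A multiset policy: a multiset over `Act ⊕ Loc` with multiplicities in
`ℕ ∪ {ω}` (i.e. `ℕ∞`) and finite support.  Multiset sum is `+` (with `ω = ⊤`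
absorbing) and multiset inclusion is the pointwise order `≤`. -/
abbrev MPolicy (Act Loc : Type) : Type := (Act ⊕ Loc) →₀ ℕ∞

/-- `T^ω`: the multiset assigning `ω` to every element of the support of `T`. -/
noncomputable def omegafy (T : MPolicy Act Loc) : MPolicy Act Loc :=
  Finsupp.mapRange (fun n => if n = 0 then 0 else (⊤ : ℕ∞)) (by simp) T

/-- Typechecking of agents against multiset policies, `⊢ P : T`. -/
inductive MTypes : Agent Act Loc (MPolicy Act Loc) → MPolicy Act Loc → Prop where
  | nil (T) : MTypes Agent.nil T
  | act {a P T} :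
      MTypes P T → MTypes (Agent.act a P) (T + Finsupp.single (Sum.inl a) 1)
  | go {l T' P T} :
      MTypes P T' → MTypes (Agent.go l T' P) (T + Finsupp.single (Sum.inr l) 1)
  | par {P Q T1 T2} :
      MTypes P T1 → MTypes Q T2 → MTypes (Agent.par P Q) (T1 + T2)
  | repl {P T T'} : MTypes P T → omegafy T ≤ T' → MTypes (Agent.repl P) T'

/-- `Sset σ`: the multiset of labels occurring in the trace `σ`. -/
noncomputable def Sset (σ : List (Act ⊕ Loc)) : MPolicy Act Loc :=
  (σ.map fun α => Finsupp.single α (1 : ℕ∞)).sum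

/-- Well-formedness of systems for multiset (entry) policies: at a trustworthy
site every thread component of the resident code typechecks against the
membrane's policy. -/
inductive OkM : System Act Loc (MPolicy Act Loc) → Prop where
  | empty : OkM System.empty
  | par {N1 N2} : OkM N1 → OkM N2 → OkM (System.par N1 N2)
  | siteU {l M P} : ¬ Trustworthy l M → OkM (System.site l M P)
  | siteG {l M P} :
      Trustworthy l M → (∀ Pi ∈ Agent.comps P, MTypes Pi M.pol) →
      OkM (System.site l M P)

/-! ## Policy inference (minimal multiset policies) -/

/-- Policy inference `⊩ P : T`, computing the minimal multiset policy of an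
agent: `⊩nil:∅`; `⊩a.P:T∪{a}` if `⊩P:T`; `⊩go(l,T).P:{l}` if `⊩P:T'` for some
`T' ≤ T`; `⊩P|Q:T1∪T2`; `⊩!P:T^ω`. -/
inductive MInf : Agent Act Loc (MPolicy Act Loc) → MPolicy Act Loc → Prop where
  | nil : MInf Agent.nil 0
  | act {a P T} :
      MInf P T → MInf (Agent.act a P) (T + Finsupp.single (Sum.inl a) 1)
  | go {l T P T'} :
      MInf P T' → T' ≤ T → MInf (Agent.go l T P) (Finsupp.single (Sum.inr l) 1)
  | par {P Q T1 T2} :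
      MInf P T1 → MInf Q T2 → MInf (Agent.par P Q) (T1 + T2)
  | repl {P T} : MInf P T → MInf (Agent.repl P) (omegafy T)

/-! ## Resident policies and dynamic membranes -/

/-- The dynamic-membrane reduction relation.  In rule `mig`, letting `T'` be
the digest `T` if the source is trusted and `ptype(P)` otherwise, the side
condition is `T' ≤ M^l_p`, `M^l_p = M̂^l_p ∪ T'` and `M̂^l_t = M^l_t`: the
target membrane's policy decreases by the resources allocated to `P`. -/
inductive RedD :
    System Act Loc (MPolicy Act Loc) → System Act Loc (MPolicy Act Loc) → Prop where
  | act (l M a P Q) :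
      RedD (System.site l M (Agent.par (Agent.act a P) Q))
        (System.site l M (Agent.par P Q))
  | par {N1 N1'} (N2) : RedD N1 N1' → RedD (System.par N1 N2) (System.par N1' N2)
  | struct {N N1 N1' N'} : StrEq N N1 → RedD N1 N1' → StrEq N1' N' → RedD N N'
  | mig (k Mk l Ml Mlhat T T' P Q R) :
      (if Ml.trust k = TrustLev.lgood then T' = T else MInf P T') →
      T' ≤ Ml.pol →
      Ml.pol = Mlhat.pol + T' →
      Mlhat.trust = Ml.trust →
      RedD
        (System.par (System.site k Mk (Agent.par (Agent.go l T P) Q))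
          (System.site l Ml R))
        (System.par (System.site k Mk Q) (System.site l Mlhat (Agent.par P R)))

/-- Well-formedness relative to an external record `Θ` of the original
resident policies: `Θ ⊢ l[M]{P} : ok` for trustworthy `l` iff
`ptype(P) ∪ M_p ≤ Θ(l)`. -/
inductive ThOk (Θ : Loc → MPolicy Act Loc) :
    System Act Loc (MPolicy Act Loc) → Prop where
  | empty : ThOk Θ System.empty
  | par {N1 N2} : ThOk Θ N1 → ThOk Θ N2 → ThOk Θ (System.par N1 N2)
  | siteU {l M P} : ¬ Trustworthy l M → ThOk Θ (System.site l M P)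
  | siteG {l M P T} :
      Trustworthy l M → MInf P T → T + M.pol ≤ Θ l → ThOk Θ (System.site l M P)
/-! Each transition `P →α P'` consumes one copy of `α` from the inferred policy of `P`, leaving
a policy that bounds the inferred policy of `P'`; replication costs nothing, since `T ∪ T^ω = T^ω`.
Along a trace the labels therefore add up to at most `ptype(P)`, which is below `Θ(l)` by
well-formedness. -/

lemma add_omegafy_le (T : MPolicy Act Loc) : T + omegafy T ≤ omegafy T := by
  intro x
  simp only [Finsupp.add_apply, omegafy, Finsupp.mapRange_apply]
  by_cases h : T x = 0 <;> simp [h]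

lemma Sset_cons (α : Act ⊕ Loc) (σ : List (Act ⊕ Loc)) :
    Sset (α :: σ) = Sset σ + Finsupp.single α 1 := by
  simp [Sset, add_comm]

lemma Step.exists_MInf_add_single_le {P P' : Agent Act Loc (MPolicy Act Loc)}
    {α : Act ⊕ Loc} {T : MPolicy Act Loc} (hs : Step P α P') (hP : MInf P T) :
    ∃ T', MInf P' T' ∧ T' + Finsupp.single α 1 ≤ T := by
  induction hs generalizing T with
  | act a P =>
    cases hP with
    | act hP => exact ⟨_, hP, le_rfl⟩
  | mig l T₀ P => exact ⟨0, MInf.nil, by cases hP; simp⟩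
  | repl _ ih =>
    cases hP with
    | repl hP =>
      obtain ⟨T', hP', hle⟩ := ih (MInf.par hP (MInf.repl hP))
      exact ⟨T', hP', hle.trans (add_omegafy_le _)⟩
  | parL Q _ ih =>
    cases hP with
    | par hP hQ =>
      obtain ⟨T', hP', hle⟩ := ih hP
      refine ⟨_, MInf.par hP' hQ, ?_⟩
      rw [add_right_comm]
      exact add_le_add_left hle _
  | parR Q _ ih =>
    cases hP with
    | par hQ hP =>
      obtain ⟨T', hP', hle⟩ := ih hP
      refine ⟨_, MInf.par hQ hP', ?_⟩
      rw [add_assoc]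
      exact add_le_add_right hle _

lemma Trace.Sset_le_of_MInf {P P' : Agent Act Loc (MPolicy Act Loc)} {σ : List (Act ⊕ Loc)}
    {T : MPolicy Act Loc} (htr : Trace P σ P') (hP : MInf P T) : Sset σ ≤ T := by
  induction htr generalizing T with
  | nil P => simp [Sset]
  | cons hs _ ih =>
    obtain ⟨T', hP', hle⟩ := hs.exists_MInf_add_single_le hP
    rw [Sset_cons]
    exact (add_le_add_left (ih hP') _).trans hle

lemma ThOk.exists_MInf_add_pol_le {Θ : Loc → MPolicy Act Loc}
    {N : System Act Loc (MPolicy Act Loc)} {l : Loc} {M : Membrane Loc (MPolicy Act Loc)}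
    {P : Agent Act Loc (MPolicy Act Loc)} (hok : ThOk Θ N) (hsite : SiteIn l M P N)
    (htw : Trustworthy l M) : ∃ T, MInf P T ∧ T + M.pol ≤ Θ l := by
  induction hsite with
  | here =>
    cases hok with
    | siteU hnot => exact absurd htw hnot
    | siteG _ hP hle => exact ⟨_, hP, hle⟩
  | left _ ih => cases hok with | par h₁ _ => exact ih h₁
  | right _ ih => cases hok with | par _ h₂ => exact ih h₂

theorem safety_resident_general
    {Θ : Loc → MPolicy Act Loc} {N : System Act Loc (MPolicy Act Loc)}
    (hok : ThOk Θ N)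
    {l : Loc} {M : Membrane Loc (MPolicy Act Loc)} {P : Agent Act Loc (MPolicy Act Loc)}
    (hsite : SiteIn l M P N) (htw : Trustworthy l M)
    {σ : List (Act ⊕ Loc)} {P' : Agent Act Loc (MPolicy Act Loc)}
    (htr : Trace P σ P') :
    Sset σ ≤ Θ l := by
  obtain ⟨T, hP, hle⟩ := hok.exists_MInf_add_pol_le hsite htw
  exact (htr.Sset_le_of_MInf hP).trans (le_self_add.trans hle)

/-- **Safety for resident policies**: let `N` be well-formed with respect to
`Θ` (coherent and `Θ ⊢ N : ok`).  Then for every trustworthy site `l[M]{P}`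
in `N`, `P →σ P'` implies that the multiset `Sset(σ)` of labels occurring in
`σ` satisfies `Sset(σ) ≤ Θ(l)`. -/
theorem safety_resident
    {Θ : Loc → MPolicy Act Loc} {N : System Act Loc (MPolicy Act Loc)}
    (hcoh : Coherent N) (hok : ThOk Θ N)
    {l : Loc} {M : Membrane Loc (MPolicy Act Loc)} {P : Agent Act Loc (MPolicy Act Loc)}
    (hsite : SiteIn l M P N) (htw : Trustworthy l M)
    {σ : List (Act ⊕ Loc)} {P' : Agent Act Loc (MPolicy Act Loc)}
    (htr : Trace P σ P') :
    Sset σ ≤ Θ l :=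
  safety_resident_general hok hsite htw htr
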